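/- arXiv:2507.02185 — 8 statements merged into one kernel-verified Lean document; each statement's English description precedes it below -/
import Mathlib

section
/- If U1 and U2 are special orthogonal m×m complex matrices such that U1·B·U2ᵀ is diagonal for every diagonal matrix B, then there exist a permutation matrix P and diagonal matrices B1, B2 with U1 = P·B1 and U2 = P·B2. -/
open Matrix

/-- If `U1, U2 ∈ SO(m, ℂ)` are such that `U1 * B * U2ᵀ` is diagonal for every diagonal `B`,
then `U1 = P * B1` and `U2 = P * B2` for a permutation matrix `P` and diagonal `B1, B2`. -/
theorem stmt_0 {m : ℕ} (U1 U2 : Matrix (Fin m) (Fin m) ℂ)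
    (hU1 : U1ᵀ * U1 = 1) (hU1d : U1.det = 1)
    (hU2 : U2ᵀ * U2 = 1) (hU2d : U2.det = 1)
    (h : ∀ B : Matrix (Fin m) (Fin m) ℂ, B.IsDiag → (U1 * B * U2ᵀ).IsDiag) :
    ∃ (σ : Equiv.Perm (Fin m)) (B1 B2 : Matrix (Fin m) (Fin m) ℂ),
      B1.IsDiag ∧ B2.IsDiag ∧
      U1 = σ.toPEquiv.toMatrix * B1 ∧ U2 = σ.toPEquiv.toMatrix * B2 := by
  classical
  -- key zero-product fact
  have hkey : ∀ (k i j : Fin m), i ≠ j → U1 i k * U2 j k = 0 := by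
    intro k i j hij
    have hd := h (Matrix.diagonal (Pi.single k 1)) (Matrix.isDiag_diagonal _)
    have := hd hij
    simpa [Matrix.mul_apply, Matrix.diagonal, Matrix.transpose_apply,
      Pi.single_apply, Finset.mul_sum, mul_comm, mul_assoc, ite_mul,
      Finset.sum_ite_eq, Finset.sum_ite_eq'] using this
  -- existence of nonzero entries in each column
  have hex1 : ∀ k : Fin m, ∃ i, U1 i k ≠ 0 := by
    intro k
    by_contra hc
    push_neg at hc
    have h1 : (U1ᵀ * U1) k k = 1 := by rw [hU1]; simp
    rw [Matrix.mul_apply] at h1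
    simp [Matrix.transpose_apply, hc] at h1
  have hex2 : ∀ k : Fin m, ∃ j, U2 j k ≠ 0 := by
    intro k
    by_contra hc
    push_neg at hc
    have h1 : (U2ᵀ * U2) k k = 1 := by rw [hU2]; simp
    rw [Matrix.mul_apply] at h1
    simp [Matrix.transpose_apply, hc] at h1
  set f : Fin m → Fin m := fun k => (hex1 k).choose with hfdef
  have hf : ∀ k, U1 (f k) k ≠ 0 := fun k => (hex1 k).choose_spec
  -- support of columns of U2
  have hsupp2 : ∀ k j, U2 j k ≠ 0 → j = f k := by
    intro k j hj
    by_contra hne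
    exact (mul_ne_zero (hf k) hj) (hkey k (f k) j (Ne.symm hne))
  -- support of columns of U1
  have hsupp1 : ∀ k i, U1 i k ≠ 0 → i = f k := by
    intro k i hi
    obtain ⟨j, hj⟩ := hex2 k
    have hjf := hsupp2 k j hj
    by_contra hne
    exact (mul_ne_zero hi hj) (hkey k i j (by rwa [hjf]))
  -- injectivity of f
  have hinj : Function.Injective f := by
    intro k k' hkk
    by_contra hne
    have h0 : (U1ᵀ * U1) k k' = 0 := by rw [hU1]; simp [Matrix.one_apply, hne]
    rw [Matrix.mul_apply] at h0
    have hsum : ∑ i, U1ᵀ k i * U1 i k' = U1 (f k) k * U1 (f k) k' := by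
      rw [Finset.sum_eq_single (f k)]
      · simp [Matrix.transpose_apply]
      · intro i _ hi
        have : U1 i k = 0 := by
          by_contra hz
          exact hi (hsupp1 k i hz)
        simp [Matrix.transpose_apply, this]
      · simp
    rw [hsum] at h0
    rcases mul_eq_zero.mp h0 with h1 | h2
    · exact hf k h1
    · rw [hkk] at h2; exact hf k' h2
  have hbij : Function.Bijective f := Finite.injective_iff_bijective.mp hinj
  set e : Equiv.Perm (Fin m) := Equiv.ofBijective f hbij with hedef
  have he : ∀ k, e k = f k := fun k => rfl
  refine ⟨e.symm, U1.submatrix e id, U2.submatrix e id, ?_, ?_, ?_, ?_⟩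
  · intro i j hij
    simp only [Matrix.submatrix_apply, id]
    by_contra hz
    exact hij (hinj ((hsupp1 j (e i) hz).trans (he j).symm) ▸ rfl)
  · intro i j hij
    simp only [Matrix.submatrix_apply, id]
    by_contra hz
    exact hij (hinj ((hsupp2 j (e i) hz).trans (he j).symm) ▸ rfl)
  · rw [PEquiv.toMatrix_toPEquiv_mul]
    ext i j
    simp [Matrix.submatrix_apply]
  · rw [PEquiv.toMatrix_toPEquiv_mul]
    ext i j
    simp [Matrix.submatrix_apply]
end

section
/- A state φ ∈ (ℂ^D)^{⊗n} is 1-uniform (critical) if and only if ⟨φ| E |φ⟩ = 0 for every E in the Lie algebra of SL(D)^{⊗n}, i.e., for every operator of the form E₁⊗I⊗⋯⊗I + I⊗E₂⊗⋯⊗I + ⋯ + I⊗⋯⊗E_n with each E_i traceless. -/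
open scoped BigOperators
noncomputable section

/-- Reduced density matrix of `ψ` on the sites in `S` (up to a uniform positive factor),
in the "merged index" representation: entries only depend on `a, b` through their values on `S`. -/
def red {n D : ℕ} (ψ : (Fin n → Fin D) → ℂ) (S : Finset (Fin n)) (a b : Fin n → Fin D) : ℂ :=
  ∑ f : Fin n → Fin D,
    ψ (fun i => if i ∈ S then a i else f i) *
      (starRingEnd ℂ) (ψ (fun i => if i ∈ S then b i else f i))

/-- The reduction of `ψ` to the sites in `S` is proportional to the identity. -/
def UniformOn {n D : ℕ} (ψ : (Fin n → Fin D) → ℂ) (S : Finset (Fin n)) : Prop :=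
  ∃ c : ℂ, ∀ a b, red ψ S a b = if (∀ i ∈ S, a i = b i) then c else 0

/-- `ψ` is `r`-uniform: every reduction to `r` sites is proportional to the identity. -/
def IsUniform {n D : ℕ} (r : ℕ) (ψ : (Fin n → Fin D) → ℂ) : Prop :=
  ∀ S : Finset (Fin n), S.card = r → UniformOn ψ S

/-- The single-site operator `I ⊗ ⋯ ⊗ E ⊗ ⋯ ⊗ I` with `E` in slot `k`. -/
def siteOp {n D : ℕ} (k : Fin n) (E : Matrix (Fin D) (Fin D) ℂ) :
    Matrix (Fin n → Fin D) (Fin n → Fin D) ℂ :=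
  Matrix.of fun f g => if ∀ j, j ≠ k → f j = g j then E (f k) (g k) else 0

/-!
The expectation of a single-site operator `E` at site `k` is `tr (E ρₖ)` for the single-site
reduced density matrix `ρₖ`. Since commutators are traceless,
`tr (E ρₖ) = 0` for every traceless `E` forces `ρₖ` to commute with every matrix unit, i.e. to be
scalar, which is exactly 1-uniformity at site `k`. The traceless parts at the different sites can
be chosen independently, so the condition on `E₁ ⊗ I ⋯ + ⋯ + I ⋯ ⊗ Eₙ` splits site by site.
-/

namespace Matrix

variable {m R : Type*} [Fintype m] [DecidableEq m] [CommRing R]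

theorem mem_range_scalar_iff_forall_trace_mul_eq_zero {M : Matrix m m R} :
    M ∈ Set.range (scalar m) ↔ ∀ E : Matrix m m R, E.trace = 0 → (E * M).trace = 0 := by
  refine ⟨?_, fun h => mem_range_scalar_iff_commute_single'.mpr fun i j => ?_⟩
  · rintro ⟨c, rfl⟩ E hE
    simpa [trace, ← Finset.sum_mul] using congrArg (· * c) hE
  · rw [Commute, SemiconjBy, ext_iff_trace_mul_left]
    intro X
    have hcomm : (X * single i j 1 - single i j 1 * X).trace = 0 := by
      rw [trace_sub, trace_mul_comm, sub_self]
    have := h _ hcomm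
    rw [sub_mul, trace_sub, sub_eq_zero] at this
    rwa [← Matrix.mul_assoc, ← Matrix.mul_assoc, trace_mul_cycle X M]

end Matrix

theorem Fintype.sum_sum_update_eq_card_smul {ι β M : Type*} [Fintype ι] [DecidableEq ι]
    [Fintype β] [AddCommMonoid M] (k : ι) (G : (ι → β) → M) :
    ∑ f : ι → β, ∑ x : β, G (Function.update f k x) = Fintype.card β • ∑ f, G f := by
  let swap : (ι → β) × β → (ι → β) × β := fun p => (Function.update p.1 k p.2, p.1 k)
  have hswap : Function.Involutive swap := fun p => by
    simp only [swap, Function.update_idem, Function.update_self, Function.update_eq_self]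
  calc ∑ f : ι → β, ∑ x : β, G (Function.update f k x)
      = ∑ p : (ι → β) × β, G (hswap.toPerm swap p).1 := by
        rw [Fintype.sum_prod_type]
        rfl
    _ = ∑ p : (ι → β) × β, G p.1 := Equiv.sum_comp (hswap.toPerm swap) fun p => G p.1
    _ = Fintype.card β • ∑ f, G f := by
      simp only [Fintype.sum_prod_type, Finset.sum_const, Finset.card_univ, Finset.smul_sum]

open scoped Matrix

variable {n D : ℕ}

def expect (φ : (Fin n → Fin D) → ℂ) (A : Matrix (Fin n → Fin D) (Fin n → Fin D) ℂ) : ℂ :=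
  ∑ f, starRingEnd ℂ (φ f) * (A *ᵥ φ) f

/-- `D` times the reduced density matrix of `φ` at site `k`: the sum also runs over the
irrelevant value `f k`. -/
def reducedMatrix (φ : (Fin n → Fin D) → ℂ) (k : Fin n) : Matrix (Fin D) (Fin D) ℂ :=
  Matrix.of fun y x =>
    ∑ f, φ (Function.update f k y) * starRingEnd ℂ (φ (Function.update f k x))

theorem red_singleton (φ : (Fin n → Fin D) → ℂ) (k : Fin n) (a b : Fin n → Fin D) :
    red φ {k} a b = reducedMatrix φ k (a k) (b k) := by
  have hupd : ∀ c f : Fin n → Fin D,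
      (fun i => if i ∈ ({k} : Finset (Fin n)) then c i else f i) = Function.update f k (c k) :=
    fun c f => funext fun i => by by_cases h : i = k <;> simp [h]
  simp only [red, reducedMatrix, Matrix.of_apply, hupd]

theorem uniformOn_singleton_iff (φ : (Fin n → Fin D) → ℂ) (k : Fin n) :
    UniformOn φ {k} ↔ reducedMatrix φ k ∈ Set.range (Matrix.scalar (Fin D)) := by
  simp only [UniformOn, red_singleton, Finset.mem_singleton, forall_eq, Set.mem_range,
    Matrix.scalar_apply]
  refine exists_congr fun c => ⟨fun h => Matrix.ext fun y x => ?_, fun h a b => ?_⟩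
  · simpa [Matrix.diagonal_apply, eq_comm] using (h (fun _ => y) (fun _ => x)).symm
  · simp [← h, Matrix.diagonal_apply]

theorem isUniform_one_iff (φ : (Fin n → Fin D) → ℂ) :
    IsUniform 1 φ ↔ ∀ k, UniformOn φ {k} := by
  refine ⟨fun h k => h {k} (Finset.card_singleton k), fun h S hS => ?_⟩
  obtain ⟨k, rfl⟩ := Finset.card_eq_one.mp hS
  exact h k

theorem siteOp_zero (k : Fin n) : siteOp (D := D) k 0 = 0 := by
  ext f g
  simp [siteOp]

theorem siteOp_mulVec_apply (φ : (Fin n → Fin D) → ℂ) (k : Fin n)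
    (E : Matrix (Fin D) (Fin D) ℂ) (f : Fin n → Fin D) :
    (siteOp k E *ᵥ φ) f = ∑ y, E (f k) y * φ (Function.update f k y) := by
  have hfilter : Finset.univ.filter (fun g : Fin n → Fin D => ∀ j, j ≠ k → f j = g j)
      = Finset.univ.image (Function.update f k) := by
    ext g
    simp only [Finset.mem_filter, Finset.mem_univ, true_and, Finset.mem_image]
    refine ⟨fun h => ⟨g k, ?_⟩, ?_⟩
    · rw [Function.update_eq_iff]
      exact ⟨rfl, fun j hj => h j hj⟩
    · rintro ⟨y, rfl⟩ j hj
      rw [Function.update_of_ne hj]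
  simp only [Matrix.mulVec, dotProduct, siteOp, Matrix.of_apply, ite_mul, zero_mul]
  rw [← Finset.sum_filter, hfilter,
    Finset.sum_image fun _ _ _ _ h => Function.update_injective f k h]
  simp only [Function.update_self]

theorem card_mul_expect_siteOp (φ : (Fin n → Fin D) → ℂ) (k : Fin n)
    (E : Matrix (Fin D) (Fin D) ℂ) :
    (D : ℂ) * expect φ (siteOp k E) = (E * reducedMatrix φ k).trace := by
  have hsum := Fintype.sum_sum_update_eq_card_smul k fun f =>
    starRingEnd ℂ (φ f) * ∑ y, E (f k) y * φ (Function.update f k y)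
  simp only [Function.update_self, Function.update_idem, Fintype.card_fin, nsmul_eq_mul] at hsum
  rw [expect]
  simp only [siteOp_mulVec_apply]
  rw [← hsum, Finset.sum_comm]
  simp only [Matrix.trace, Matrix.diag_apply, Matrix.mul_apply, reducedMatrix, Matrix.of_apply,
    Finset.mul_sum]
  refine Finset.sum_congr rfl fun x _ => ?_
  rw [Finset.sum_comm]
  exact Finset.sum_congr rfl fun _ _ => Finset.sum_congr rfl fun _ _ => by ring

theorem expect_siteOp_eq_zero_iff (φ : (Fin n → Fin D) → ℂ) (k : Fin n)
    (E : Matrix (Fin D) (Fin D) ℂ) :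
    expect φ (siteOp k E) = 0 ↔ (E * reducedMatrix φ k).trace = 0 := by
  rcases Nat.eq_zero_or_pos D with rfl | hD
  · have : IsEmpty (Fin n → Fin 0) := ⟨fun f => (f k).elim0⟩
    simp [expect]
  · rw [← card_mul_expect_siteOp, mul_eq_zero, or_iff_right (by exact_mod_cast hD.ne')]

theorem expect_sum (φ : (Fin n → Fin D) → ℂ) {ι : Type*} [Fintype ι]
    (A : ι → Matrix (Fin n → Fin D) (Fin n → Fin D) ℂ) :
    expect φ (∑ i, A i) = ∑ i, expect φ (A i) := by
  simp only [expect, Matrix.sum_mulVec, Finset.sum_apply, Finset.mul_sum]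
  exact Finset.sum_comm

/-- A state `φ ∈ (ℂ^D)^{⊗n}` is 1-uniform (critical) iff `⟨φ|E|φ⟩ = 0` for every
`E = E₁⊗I⊗⋯⊗I + ⋯ + I⊗⋯⊗E_n` with each `E_i` traceless. -/
theorem stmt_2 {n D : ℕ} (φ : (Fin n → Fin D) → ℂ) :
    IsUniform 1 φ ↔
      ∀ Es : Fin n → Matrix (Fin D) (Fin D) ℂ, (∀ k, (Es k).trace = 0) →
        ∑ f : Fin n → Fin D,
          (starRingEnd ℂ) (φ f) * (∑ k : Fin n, ((siteOp k (Es k)).mulVec φ) f) = 0 := by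
  have hexpect : ∀ Es : Fin n → Matrix (Fin D) (Fin D) ℂ,
      ∑ f, starRingEnd ℂ (φ f) * ∑ k, (siteOp k (Es k) *ᵥ φ) f
        = ∑ k, expect φ (siteOp k (Es k)) := fun Es => by
    rw [← expect_sum, expect, Matrix.sum_mulVec]
    simp only [Finset.sum_apply]
  simp only [isUniform_one_iff, uniformOn_singleton_iff,
    Matrix.mem_range_scalar_iff_forall_trace_mul_eq_zero, ← expect_siteOp_eq_zero_iff, hexpect]
  refine ⟨fun h Es hEs => Finset.sum_eq_zero fun k _ => h k (Es k) (hEs k), fun h k E hE => ?_⟩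
  have hsingle := h (Pi.single k E) fun j => by
    by_cases hj : j = k
    · subst hj; simpa using hE
    · simp [hj]
  rwa [Fintype.sum_eq_single k fun j hj => by simp [hj, siteOp_zero, expect],
    Pi.single_eq_same] at hsingle
end
end

section
/- Let A ∈ ℂ^{4×4} and let B ∈ ℂ^{4×4} be diagonal. If AB and BA are both symmetric, then A·conj(B) and conj(B)·A are both symmetric, where conj(B) is the entrywise complex conjugate of B. -/
open Matrix

private lemma key_aux (a b x y : ℂ) (E1 : a * y = b * x) (E2 : x * a = y * b) :
    a * (starRingEnd ℂ) y = b * (starRingEnd ℂ) x := by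
  rcases eq_or_ne (y * y) (x * x) with h | h
  · have h0 : (y - x) * (y + x) = 0 := by linear_combination h
    rcases mul_eq_zero.mp h0 with h' | h'
    · have hy : y = x := sub_eq_zero.mp h'
      subst hy
      rcases eq_or_ne y 0 with rfl | hy0
      · simp
      · have hab : a = b := mul_right_cancel₀ hy0 E1
        rw [hab]
    · have hy : y = -x := by linear_combination h'
      subst hy
      rcases eq_or_ne x 0 with rfl | hx0
      · simp
      · have hab : a = -b := by
          have : a * x = -b * x := by linear_combination -E1
          exact mul_right_cancel₀ hx0 this
        rw [hab]
        simp only [map_neg]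
        ring
  · have ha : a = 0 := by
      have h3 : a * (y * y - x * x) = 0 := by linear_combination y * E1 - x * E2
      exact (mul_eq_zero.mp h3).resolve_right (sub_ne_zero.mpr h)
    have hb : b = 0 := by
      have h3 : b * (y * y - x * x) = 0 := by linear_combination x * E1 - y * E2
      exact (mul_eq_zero.mp h3).resolve_right (sub_ne_zero.mpr h)
    simp [ha, hb]

/-- If `B` is diagonal and `A*B`, `B*A` are both symmetric, then `A*conj(B)` and
`conj(B)*A` are both symmetric. -/
theorem stmt_5 (A B : Matrix (Fin 4) (Fin 4) ℂ) (hB : B.IsDiag)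
    (h1 : (A * B).IsSymm) (h2 : (B * A).IsSymm) :
    (A * B.map (starRingEnd ℂ)).IsSymm ∧ (B.map (starRingEnd ℂ) * A).IsSymm := by
  obtain ⟨d, rfl⟩ : ∃ d, B = diagonal d := ⟨B.diag, hB.diagonal_diag.symm⟩
  have hmap : (diagonal d).map (starRingEnd ℂ) = diagonal (fun i => (starRingEnd ℂ) (d i)) :=
    diagonal_map (map_zero _)
  rw [hmap]
  have E1 : ∀ i j, A i j * d j = A j i * d i := by
    intro i j
    have := h1.apply i j
    simpa [Matrix.mul_diagonal] using this.symm
  have E2 : ∀ i j, d i * A i j = d j * A j i := by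
    intro i j
    have := h2.apply i j
    simpa [Matrix.diagonal_mul] using this.symm
  constructor
  · apply Matrix.ext
    intro i j
    simp only [transpose_apply, Matrix.mul_diagonal]
    exact key_aux (A j i) (A i j) (d j) (d i) (E1 j i) (E2 j i)
  · apply Matrix.ext
    intro i j
    simp only [transpose_apply, Matrix.diagonal_mul]
    rw [mul_comm, mul_comm ((starRingEnd ℂ) (d i))]
    exact key_aux (A j i) (A i j) (d i) (d j) (by linear_combination -(E2 i j)) (by linear_combination -(E1 i j))
end

section
/- Let g₀ = so(4,ℂ) ⊕ so(4,ℂ) act on ℂ^{4×4} by (E₁, E₂)·A = E₁A + AE₂ᵀ. An element A ∈ ℂ^{4×4} satisfies tr((E₁A + AE₂ᵀ)·A†) = 0 for all E₁, E₂ ∈ so(4,ℂ) if and only if [M_A, M_A†] = 0, where M_A = [[0, A], [-Aᵀ, 0]]. -/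
/-!
Since `tr((E₁A + AE₂ᵀ)A†) = tr(E₁ · AA†) + tr(E₂ᵀ · A†A)` and `E₁`, `E₂ᵀ` range independently over
the skew-symmetric matrices, the left-hand side says that `AA†` and `A†A` are orthogonal to all
skew-symmetric matrices for the trace form, i.e. that they are symmetric. On the other side,
`M_A M_A†` and `M_A† M_A` are block diagonal with diagonal blocks `AA†, (A†A)ᵀ` and
`(AA†)ᵀ, A†A` respectively.
-/

open Matrix

namespace Matrix

variable {m n R : Type*} [Fintype m] [Fintype n] [CommRing R]

theorem forall_skew_trace_mul_eq_zero_iff [DecidableEq n] [IsAddTorsionFree R]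
    (B : Matrix n n R) : (∀ E : Matrix n n R, Eᵀ = -E → (E * B).trace = 0) ↔ B.IsSymm := by
  constructor
  · intro h
    refine IsSymm.ext fun i j => ?_
    have hskew : (single i j (1 : R) - single j i 1)ᵀ = -(single i j 1 - single j i 1) := by
      rw [transpose_sub, transpose_single, transpose_single, neg_sub]
    have := h _ hskew
    rwa [sub_mul, trace_sub, trace_single_mul, trace_single_mul, one_smul, one_smul,
      sub_eq_zero] at this
  · intro hB E hE
    refine self_eq_neg.mp ?_
    calc (E * B).trace = (E * B)ᵀ.trace := (trace_transpose _).symm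
      _ = -(B * E).trace := by rw [transpose_mul, hB.eq, hE, Matrix.mul_neg, trace_neg]
      _ = -(E * B).trace := by rw [trace_mul_comm]

theorem trace_add_mul_transpose_mul (E₁ : Matrix m m R) (E₂ : Matrix n n R)
    (A : Matrix m n R) (B : Matrix n m R) :
    ((E₁ * A + A * E₂ᵀ) * B).trace = (E₁ * (A * B)).trace + (E₂ᵀ * (B * A)).trace := by
  rw [Matrix.add_mul, trace_add, Matrix.mul_assoc, Matrix.mul_assoc, trace_mul_comm A,
    Matrix.mul_assoc]

theorem forall_skew_trace_add_mul_transpose_mul_eq_zero_iff [DecidableEq m] [DecidableEq n]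
    [IsAddTorsionFree R] (A : Matrix m n R) (B : Matrix n m R) :
    (∀ (E₁ : Matrix m m R) (E₂ : Matrix n n R), E₁ᵀ = -E₁ → E₂ᵀ = -E₂ →
        ((E₁ * A + A * E₂ᵀ) * B).trace = 0) ↔
      (A * B).IsSymm ∧ (B * A).IsSymm := by
  simp only [trace_add_mul_transpose_mul, ← forall_skew_trace_mul_eq_zero_iff]
  constructor
  · intro h
    refine ⟨fun E hE => by simpa using h E 0 hE (by simp), fun E hE => ?_⟩
    simpa using h 0 Eᵀ (by simp) (by rw [transpose_transpose, hE, neg_neg])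
  · rintro ⟨hAB, hBA⟩ E₁ E₂ hE₁ hE₂
    rw [hAB E₁ hE₁, hBA E₂ᵀ (by rw [transpose_transpose, hE₂, neg_neg]), add_zero]

theorem fromBlocks_neg_transpose_mul_conjTranspose_comm_iff [StarRing R] (A : Matrix m n R) :
    fromBlocks 0 A (-Aᵀ) 0 * (fromBlocks 0 A (-Aᵀ) 0)ᴴ =
        (fromBlocks 0 A (-Aᵀ) 0)ᴴ * fromBlocks 0 A (-Aᵀ) 0 ↔
      (A * Aᴴ).IsSymm ∧ (Aᴴ * A).IsSymm := by
  have hAAh : Aᵀᴴ * Aᵀ = (A * Aᴴ)ᵀ := by rw [transpose_mul]; rfl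
  have hAhA : Aᵀ * Aᵀᴴ = (Aᴴ * A)ᵀ := by rw [transpose_mul]; rfl
  simp only [fromBlocks_conjTranspose, fromBlocks_multiply, conjTranspose_zero,
    conjTranspose_neg, Matrix.mul_zero, Matrix.zero_mul, Matrix.neg_mul, Matrix.mul_neg,
    neg_neg, neg_zero, add_zero, zero_add, fromBlocks_inj, hAAh, hAhA, true_and]
  exact and_congr eq_comm Iff.rfl

end Matrix

/-- `tr((E₁A + AE₂ᵀ)A†) = 0` for all `E₁, E₂ ∈ so(4,ℂ)` iff `[M_A, M_A†] = 0`,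
where `M_A = [[0,A],[-Aᵀ,0]]`. -/
theorem stmt_6 (A : Matrix (Fin 4) (Fin 4) ℂ) :
    (∀ E1 E2 : Matrix (Fin 4) (Fin 4) ℂ, E1ᵀ = -E1 → E2ᵀ = -E2 →
      ((E1 * A + A * E2ᵀ) * Aᴴ).trace = 0) ↔
    Matrix.fromBlocks (0 : Matrix (Fin 4) (Fin 4) ℂ) A (-Aᵀ) 0 *
        (Matrix.fromBlocks (0 : Matrix (Fin 4) (Fin 4) ℂ) A (-Aᵀ) 0)ᴴ =
      (Matrix.fromBlocks (0 : Matrix (Fin 4) (Fin 4) ℂ) A (-Aᵀ) 0)ᴴ *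
        Matrix.fromBlocks (0 : Matrix (Fin 4) (Fin 4) ℂ) A (-Aᵀ) 0 := by
  rw [fromBlocks_neg_transpose_mul_conjTranspose_comm_iff,
    forall_skew_trace_add_mul_transpose_mul_eq_zero_iff]
end

section
/- With T as above, the image p(SU(2) × SU(2)) under p(A, B) = T(A⊗B)T† is contained in SO(4,ℂ) ∩ U(4) = SO(4,ℝ); in particular T(A⊗B)T† is a real orthogonal matrix for all A, B ∈ SU(2). -/
open Matrix Complex
noncomputable section

/-- Kronecker product of 2×2 matrices as a 4×4 matrix, via `|i⟩|j⟩ ↦ |2i+j⟩`. -/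
def kron (A B : Matrix (Fin 2) (Fin 2) ℂ) : Matrix (Fin 4) (Fin 4) ℂ :=
  Matrix.of fun i j =>
    A ⟨i.val / 2, by have := i.isLt; omega⟩ ⟨j.val / 2, by have := j.isLt; omega⟩ *
      B ⟨i.val % 2, by have := i.isLt; omega⟩ ⟨j.val % 2, by have := j.isLt; omega⟩

/-- The unitary matrix `T` from the paper. -/
def Tmat : Matrix (Fin 4) (Fin 4) ℂ :=
  (Real.sqrt 2 : ℂ)⁻¹ • !![1, 0, 0, 1; 0, I, I, 0; 0, -1, 1, 0; I, 0, 0, -I]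

/-!
Every `A ∈ SL(2,ℂ)` satisfies `Aᵀ J A = (det A) J` for `J = !![0, 1; -1, 0]`, so `A ⊗ B` preserves
the symmetric bilinear form `J ⊗ J` when `det A = det B = 1`. The matrix `T` satisfies
`Tᵀ T = J ⊗ J`, hence conjugation by the unitary `T` turns `J ⊗ J`-isometries into complex
orthogonal matrices. For `A, B ∈ SU(2)` the conjugate is moreover unitary, and a matrix with
`Mᵀ = M⁻¹ = Mᴴ` has real entries.
-/

open scoped Kronecker

theorem transpose_mul_self_conj_eq_one {n R : Type*} [Fintype n] [DecidableEq n] [CommRing R]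
    {U V K E : Matrix n n R} (hUV : U * V = 1) (hUE : Uᵀ * U = E) (hK : Kᵀ * E * K = E) :
    (U * K * V)ᵀ * (U * K * V) = 1 := by
  calc (U * K * V)ᵀ * (U * K * V) = Vᵀ * (Kᵀ * (Uᵀ * U) * K) * V := by
        simp only [transpose_mul, Matrix.mul_assoc]
    _ = (U * V)ᵀ * (U * V) := by
        rw [hUE, hK, ← hUE, transpose_mul]; simp only [Matrix.mul_assoc]
    _ = 1 := by rw [hUV, transpose_one, Matrix.one_mul]

theorem im_apply_eq_zero_of_orthogonal_of_unitary {n : Type*} [Fintype n] [DecidableEq n]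
    {M : Matrix n n ℂ} (hO : Mᵀ * M = 1) (hU : Mᴴ * M = 1) (i j : n) : (M i j).im = 0 := by
  have hT : Mᵀ = Mᴴ := by
    rw [← inv_eq_left_inv hO, inv_eq_left_inv hU]
  exact conj_eq_iff_im.1 (congrFun (congrFun hT j) i).symm

def J2 (R : Type*) [Ring R] : Matrix (Fin 2) (Fin 2) R := !![0, 1; -1, 0]

theorem transpose_mul_J2_mul {R : Type*} [CommRing R] (A : Matrix (Fin 2) (Fin 2) R) :
    Aᵀ * J2 R * A = A.det • J2 R := by
  ext i j
  fin_cases i <;> fin_cases j <;>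
    simp [J2, Matrix.mul_apply, Fin.sum_univ_two, Matrix.det_fin_two] <;> ring

section Kron

variable (A B C D : Matrix (Fin 2) (Fin 2) ℂ)

theorem kron_eq_reindex_kronecker :
    kron A B = reindex finProdFinEquiv finProdFinEquiv (A ⊗ₖ B) := rfl

theorem kron_mul_kron : kron A B * kron C D = kron (A * C) (B * D) := by
  simp only [kron_eq_reindex_kronecker, reindex_apply, submatrix_mul_equiv, mul_kronecker_mul]

theorem transpose_kron : (kron A B)ᵀ = kron Aᵀ Bᵀ := by
  simp only [kron_eq_reindex_kronecker, transpose_reindex, kroneckerMap_transpose]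

theorem conjTranspose_kron : (kron A B)ᴴ = kron Aᴴ Bᴴ := by
  simp only [kron_eq_reindex_kronecker, conjTranspose_reindex, conjTranspose_kronecker]

theorem kron_one : kron 1 1 = 1 := by
  simp only [kron_eq_reindex_kronecker, one_kronecker_one, reindex_apply, submatrix_one_equiv]

theorem det_kron : (kron A B).det = A.det ^ 2 * B.det ^ 2 := by
  rw [kron_eq_reindex_kronecker, det_reindex_self, det_kronecker, Fintype.card_fin]

variable {A B}

theorem kron_mem_unitaryGroup (hA : Aᴴ * A = 1) (hB : Bᴴ * B = 1) :
    kron A B ∈ unitaryGroup (Fin 4) ℂ :=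
  mem_unitaryGroup_iff'.2 <| by
    rw [star_eq_conjTranspose, conjTranspose_kron, kron_mul_kron, hA, hB, kron_one]

theorem transpose_kron_mul_kron_J2_mul_kron (hA : A.det = 1) (hB : B.det = 1) :
    (kron A B)ᵀ * kron (J2 ℂ) (J2 ℂ) * kron A B = kron (J2 ℂ) (J2 ℂ) := by
  rw [transpose_kron, kron_mul_kron, kron_mul_kron, transpose_mul_J2_mul, transpose_mul_J2_mul,
    hA, hB, one_smul]

end Kron

theorem ofReal_sqrt_two_sq : (Real.sqrt 2 : ℂ) ^ 2 = 2 := by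
  rw [← Complex.ofReal_pow, Real.sq_sqrt zero_le_two, Complex.ofReal_ofNat]

theorem Tmat_mem_unitaryGroup : Tmat ∈ unitaryGroup (Fin 4) ℂ := by
  rw [mem_unitaryGroup_iff]
  ext i j
  fin_cases i <;> fin_cases j <;>
    simp [Tmat, Matrix.mul_apply, Fin.sum_univ_four] <;> ring_nf <;> simp [ofReal_sqrt_two_sq]

theorem Tmat_transpose_mul_self : Tmatᵀ * Tmat = kron (J2 ℂ) (J2 ℂ) := by
  ext i j
  fin_cases i <;> fin_cases j <;>
    simp [Tmat, kron, J2, Matrix.mul_apply, Fin.sum_univ_four] <;> ring_nf <;>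
    simp [ofReal_sqrt_two_sq] <;> norm_num

/-- For `A, B ∈ SU(2)`, `T(A⊗B)T†` lies in `SO(4,ℂ) ∩ U(4) = SO(4,ℝ)`:
it is orthogonal of determinant 1, unitary, and has real entries. -/
theorem stmt_9 (A B : Matrix (Fin 2) (Fin 2) ℂ)
    (hAu : Aᴴ * A = 1) (hA : A.det = 1) (hBu : Bᴴ * B = 1) (hB : B.det = 1) :
    (Tmat * kron A B * Tmatᴴ)ᵀ * (Tmat * kron A B * Tmatᴴ) = 1 ∧
      (Tmat * kron A B * Tmatᴴ).det = 1 ∧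
      (Tmat * kron A B * Tmatᴴ)ᴴ * (Tmat * kron A B * Tmatᴴ) = 1 ∧
      ∀ i j, ((Tmat * kron A B * Tmatᴴ) i j).im = 0 := by
  have hT := Tmat_mem_unitaryGroup
  have hTTh : Tmat * Tmatᴴ = 1 := Unitary.mul_star_self_of_mem hT
  have hThT : Tmatᴴ * Tmat = 1 := Unitary.star_mul_self_of_mem hT
  have hO := transpose_mul_self_conj_eq_one hTTh
    Tmat_transpose_mul_self (transpose_kron_mul_kron_J2_mul_kron hA hB)
  have hU := mem_unitaryGroup_iff'.1
    (mul_mem (mul_mem hT (kron_mem_unitaryGroup hAu hBu)) (Unitary.star_mem hT))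
  refine ⟨hO, ?_, hU, im_apply_eq_zero_of_orthogonal_of_unitary hO hU⟩
  rw [det_conj_of_mul_eq_one hTTh hThT, det_kron, hA, hB, one_pow, one_mul]
end
end

section
/- Let Φ ∈ ℂ^K ⊗ (ℂ^D)^{⊗n} with Tr over the last n factors of |Φ⟩⟨Φ| proportional to the identity, and let Φ_i = ⟨i|₁Φ span the code C with the induced representation μ: N(C) → GL(C) in this basis. For g = (g₀, g₁, …, g_n) ∈ SL(K) × SL(D)^{×n}, we have g·Φ = Φ if and only if (g₁, …, g_n) ∈ N(C) and μ(g₁, …, g_n) = (g₀⁻¹)ᵀ. -/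
open Matrix
open scoped BigOperators
noncomputable section

/-- The local operator `g₁ ⊗ ⋯ ⊗ g_n` on `(ℂ^D)^{⊗n}`. -/
def bigOp {n D : ℕ} (gs : Fin n → Matrix (Fin D) (Fin D) ℂ) :
    Matrix (Fin n → Fin D) (Fin n → Fin D) ℂ :=
  Matrix.of fun f g => ∏ k : Fin n, gs k (f k) (g k)

/-- Let `Φ = Σ_i |i⟩ ⊗ Φ_i ∈ ℂ^K ⊗ (ℂ^D)^{⊗n}` with the trace over the last `n` factors
of `|Φ⟩⟨Φ|` proportional to the identity (i.e. the Gram matrix `⟨Φ_i|Φ_j⟩ ∝ δ_{ij}`),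
and let `C = span{Φ_i}`. For `g = (g₀, g₁, …, g_n) ∈ SL(K) × SL(D)^{×n}`:
`g·Φ = Φ` iff `(g₁,…,g_n)` stabilizes `C` and acts on the basis `{Φ_i}` by `(g₀⁻¹)ᵀ`. -/
theorem stmt_12 {K D n : ℕ} (Φ : Fin K → (Fin n → Fin D) → ℂ)
    (hΦ : ∃ c : ℂ, ∀ i j : Fin K,
      (∑ f : Fin n → Fin D, (starRingEnd ℂ) (Φ i f) * Φ j f) = if i = j then c else 0)
    (g0 : Matrix (Fin K) (Fin K) ℂ) (hg0 : g0.det = 1)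
    (gs : Fin n → Matrix (Fin D) (Fin D) ℂ) (hgs : ∀ k, (gs k).det = 1) :
    (∀ i, (∑ j, g0 i j • (bigOp gs).mulVec (Φ j)) = Φ i) ↔
      (Submodule.map (bigOp gs).mulVecLin (Submodule.span ℂ (Set.range Φ)) =
          Submodule.span ℂ (Set.range Φ) ∧
        ∀ i, (bigOp gs).mulVec (Φ i) = ∑ j, (g0⁻¹)ᵀ j i • Φ j) := by
  classical
  have hu : IsUnit g0.det := by simp [hg0]
  have hAA : g0 * g0⁻¹ = 1 := Matrix.mul_nonsing_inv _ hu
  have hAA' : g0⁻¹ * g0 = 1 := Matrix.nonsing_inv_mul _ hu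
  have key : ∀ (A B : Matrix (Fin K) (Fin K) ℂ)
      (v : Fin K → (Fin n → Fin D) → ℂ) (i : Fin K),
      (∑ j, A i j • (∑ k, B j k • v k)) = ∑ k, (A * B) i k • v k := by
    intro A B v i
    simp only [Finset.smul_sum, smul_smul, Matrix.mul_apply, Finset.sum_smul]
    rw [Finset.sum_comm]

  have one_sum : ∀ (v : Fin K → (Fin n → Fin D) → ℂ) (i : Fin K),
      (∑ k, (1 : Matrix (Fin K) (Fin K) ℂ) i k • v k) = v i := by
    intro v i
    simp [Matrix.one_apply, ite_smul, Finset.sum_ite_eq]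
  have hT : ∀ i, (∑ j, (g0⁻¹)ᵀ j i • Φ j) = ∑ j, g0⁻¹ i j • Φ j := by
    intro i; simp [Matrix.transpose_apply]
  constructor
  · intro h
    have h2 : ∀ i, (bigOp gs).mulVec (Φ i) = ∑ j, (g0⁻¹)ᵀ j i • Φ j := by
      intro i
      rw [hT]
      have : ∑ j, g0⁻¹ i j • Φ j
          = ∑ j, g0⁻¹ i j • (∑ k, g0 j k • (bigOp gs).mulVec (Φ k)) := by
        refine Finset.sum_congr rfl fun j _ => ?_
        rw [h j]
      rw [this, key, hAA', one_sum (fun k => (bigOp gs).mulVec (Φ k)) i]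
    refine ⟨?_, h2⟩
    rw [Submodule.map_span]
    apply le_antisymm
    · rw [Submodule.span_le]
      rintro _ ⟨_, ⟨i, rfl⟩, rfl⟩
      have : (bigOp gs).mulVecLin (Φ i) = ∑ j, (g0⁻¹)ᵀ j i • Φ j := h2 i
      rw [this]
      exact Submodule.sum_mem _ fun j _ => Submodule.smul_mem _ _
        (Submodule.subset_span ⟨j, rfl⟩)
    · rw [Submodule.span_le]
      rintro _ ⟨i, rfl⟩
      have : Φ i = ∑ j, g0 i j • (bigOp gs).mulVecLin (Φ j) := (h i).symm
      rw [this]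
      exact Submodule.sum_mem _ fun j _ => Submodule.smul_mem _ _
        (Submodule.subset_span (Set.mem_image_of_mem _ (Set.mem_range_self j)))
  · rintro ⟨-, h2⟩ i
    have : ∑ j, g0 i j • (bigOp gs).mulVec (Φ j)
        = ∑ j, g0 i j • (∑ k, g0⁻¹ j k • Φ k) := by
      refine Finset.sum_congr rfl fun j _ => ?_
      rw [h2 j, hT]
    rw [this, key, hAA, one_sum]
end
end

section
/- The group of triples (U₁, U₂, U₃) ∈ SO(4,ℝ)^{×3} fixing the state |GHZ(3)⟩ = Σ_{i=0}^{3}|i⟩|i⟩|i⟩ ∈ (ℂ⁴)^{⊗3} consists exactly of triples (P·B₁, P·B₂, P·B₃) where P is a permutation matrix in SO(4), each B_i is a diagonal matrix in SO(4) (diagonal entries ±1 with an even number of −1's), and B₁B₂B₃ = I. -/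
open Matrix
open scoped BigOperators
noncomputable section

/-- The local operator `U₁ ⊗ U₂ ⊗ U₃` on `(ℝ⁴)^{⊗3}`. -/
def bigOpR (U : Fin 3 → Matrix (Fin 4) (Fin 4) ℝ) :
    Matrix (Fin 3 → Fin 4) (Fin 3 → Fin 4) ℝ :=
  Matrix.of fun f g => ∏ k : Fin 3, U k (f k) (g k)

/-- The GHZ state `Σ_{i=0}^{3} |i⟩|i⟩|i⟩ ∈ (ℂ⁴)^{⊗3}` (which has real coefficients). -/
def GHZ3 (g : Fin 3 → Fin 4) : ℝ :=
  if ∃ c : Fin 4, ∀ k, g k = c then 1 else 0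

lemma GHZ3_eq_sum (g : Fin 3 → Fin 4) :
    GHZ3 g = ∑ c : Fin 4, if g = (fun _ => c) then (1:ℝ) else 0 := by
  unfold GHZ3
  by_cases h : ∃ c : Fin 4, ∀ k, g k = c
  · obtain ⟨c, hc⟩ := h
    have hg : g = fun _ => c := funext hc
    rw [if_pos ⟨c, hc⟩]
    rw [Finset.sum_eq_single c]
    · rw [if_pos hg]
    · intro b _ hb
      rw [if_neg]
      intro hgb
      exact hb (by rw [hg] at hgb; exact (funext_iff.mp hgb 0).symm ▸ rfl)
    · intro hc'; exact absurd (Finset.mem_univ c) hc'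
  · rw [if_neg h]
    refine (Finset.sum_eq_zero ?_).symm
    intro c _
    rw [if_neg]
    intro hgc
    exact h ⟨c, fun k => by rw [hgc]⟩

lemma key_sum (F : (Fin 3 → Fin 4) → ℝ) :
    (∑ g : Fin 3 → Fin 4, F g * GHZ3 g) = ∑ c : Fin 4, F (fun _ => c) := by
  simp_rw [GHZ3_eq_sum, Finset.mul_sum]
  rw [Finset.sum_comm]
  refine Finset.sum_congr rfl fun c _ => ?_
  rw [Finset.sum_eq_single (fun _ => c : Fin 3 → Fin 4)]
  · simp
  · intro b _ hb; rw [if_neg hb, mul_zero]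
  · intro h; exact absurd (Finset.mem_univ _) h

lemma rel_aux (X Y Z : Matrix (Fin 4) (Fin 4) ℝ)
    (colY : ∀ c c', (∑ j, Y j c * Y j c') = if c = c' then (1:ℝ) else 0)
    (key : ∀ i j l : Fin 4, (∑ c, X i c * Y j c * Z l c) = if i = j ∧ i = l then 1 else 0) :
    ∀ i l c, X i c * Z l c = (if i = l then Y i c else 0) := by
  intro i l c0
  have e1 : (∑ j, Y j c0 * ∑ c, X i c * Y j c * Z l c) = X i c0 * Z l c0 := by
    have : (∑ j, Y j c0 * ∑ c, X i c * Y j c * Z l c)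
        = ∑ c, (∑ j, Y j c * Y j c0) * (X i c * Z l c) := by
      simp_rw [Finset.mul_sum, Finset.sum_mul]
      rw [Finset.sum_comm]
      refine Finset.sum_congr rfl fun c _ => Finset.sum_congr rfl fun j _ => by ring
    rw [this]
    simp_rw [colY]
    simp [Finset.sum_ite_eq]
  have e2 : (∑ j, Y j c0 * ∑ c, X i c * Y j c * Z l c) = (if i = l then Y i c0 else 0) := by
    simp_rw [key]
    by_cases hil : i = l
    · subst hil
      simp [mul_ite, Finset.sum_ite_eq]
    · simp [hil]
  rw [← e1, e2]

lemma isDiag_mul_isDiag {n : Type*} [Fintype n] [DecidableEq n] {X Y : Matrix n n ℝ}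
    (hX : X.IsDiag) (hY : Y.IsDiag) : (X * Y).IsDiag := by
  intro i j hij
  rw [mul_apply]
  refine Finset.sum_eq_zero fun m _ => ?_
  by_cases him : i = m
  · subst him; rw [hY hij, mul_zero]
  · rw [hX him, zero_mul]

lemma diag_mul_apply {n : Type*} [Fintype n] [DecidableEq n] (X Y : Matrix n n ℝ)
    (hX : X.IsDiag) (d : n) : (X * Y) d d = X d d * Y d d := by
  rw [mul_apply]
  refine Finset.sum_eq_single d (fun m _ hm => ?_) (fun h => absurd (Finset.mem_univ d) h)
  rw [hX (Ne.symm hm), zero_mul]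

/-- The triples `(U₁,U₂,U₃) ∈ SO(4,ℝ)^{×3}` fixing `|GHZ(3)⟩` are exactly those of the form
`(P·B₁, P·B₂, P·B₃)` with `P ∈ SO(4)` a permutation matrix, each `B_i ∈ SO(4)` diagonal,
and `B₁B₂B₃ = 1`. -/
theorem stmt_13 (U : Fin 3 → Matrix (Fin 4) (Fin 4) ℝ)
    (hU : ∀ k, (U k)ᵀ * U k = 1) (hUd : ∀ k, (U k).det = 1) :
    (bigOpR U).mulVec GHZ3 = GHZ3 ↔
      ∃ (σ : Equiv.Perm (Fin 4)) (B : Fin 3 → Matrix (Fin 4) (Fin 4) ℝ),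
        (σ.toPEquiv.toMatrix : Matrix (Fin 4) (Fin 4) ℝ).det = 1 ∧
        (∀ k, (B k).IsDiag ∧ (B k)ᵀ * B k = 1 ∧ (B k).det = 1) ∧
        B 0 * B 1 * B 2 = 1 ∧
        ∀ k, U k = σ.toPEquiv.toMatrix * B k := by
  have col : ∀ k (c c' : Fin 4), (∑ i, U k i c * U k i c') = if c = c' then (1:ℝ) else 0 := by
    intro k c c'
    have := congrFun (congrFun (hU k) c) c'
    simpa [Matrix.mul_apply, Matrix.one_apply, Matrix.transpose_apply] using this
  constructor
  · intro h
    have key : ∀ i j l : Fin 4,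
        (∑ c, U 0 i c * U 1 j c * U 2 l c) = if i = j ∧ i = l then 1 else 0 := by
      intro i j l
      have hf := congrFun h (![i, j, l])
      rw [mulVec, dotProduct] at hf
      have heq : ∀ g, bigOpR U ![i,j,l] g * GHZ3 g
          = (fun g : Fin 3 → Fin 4 => ∏ k : Fin 3, U k (![i,j,l] k) (g k)) g * GHZ3 g :=
        fun g => rfl
      rw [Finset.sum_congr rfl fun g _ => heq g, key_sum] at hf
      have lhs : (∑ c : Fin 4, ∏ k : Fin 3, U k (![i,j,l] k) ((fun _ => c) k))
          = ∑ c, U 0 i c * U 1 j c * U 2 l c := by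
        refine Finset.sum_congr rfl fun c _ => ?_
        rw [Fin.prod_univ_three]
        simp
      have rhs : GHZ3 ![i,j,l] = if i = j ∧ i = l then (1:ℝ) else 0 := by
        unfold GHZ3
        congr 1
        simp only [eq_iff_iff]
        constructor
        · rintro ⟨c, hc⟩
          have h0 := hc 0; have h1 := hc 1; have h2 := hc 2
          simp only [Matrix.cons_val_zero, Matrix.cons_val_one, Matrix.head_cons,
            Matrix.cons_val_two, Matrix.tail_cons] at h0 h1 h2
          exact ⟨h0.trans h1.symm, h0.trans h2.symm⟩
        · rintro ⟨h1, h2⟩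
          refine ⟨i, fun k => ?_⟩
          fin_cases k <;> simp [h1.symm, h2.symm]
      rw [lhs, rhs] at hf
      exact hf
    have R1 : ∀ i l c, U 0 i c * U 2 l c = (if i = l then U 1 i c else 0) :=
      rel_aux (U 0) (U 1) (U 2) (col 1) key
    have R2 : ∀ i l c, U 0 i c * U 1 l c = (if i = l then U 2 i c else 0) := by
      refine rel_aux (U 0) (U 2) (U 1) (col 2) fun i j l => ?_
      rw [show (∑ c, U 0 i c * U 2 j c * U 1 l c) = ∑ c, U 0 i c * U 1 l c * U 2 j c from
        Finset.sum_congr rfl fun c _ => by ring, key i l j]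
      by_cases h1 : i = l <;> by_cases h2 : i = j <;> simp [h1, h2]
    have R3 : ∀ i l c, U 1 i c * U 2 l c = (if i = l then U 0 i c else 0) := by
      refine rel_aux (U 1) (U 0) (U 2) (col 0) fun i j l => ?_
      rw [show (∑ c, U 1 i c * U 0 j c * U 2 l c) = ∑ c, U 0 j c * U 1 i c * U 2 l c from
        Finset.sum_congr rfl fun c _ => by ring, key j i l]
      by_cases h1 : i = j
      · subst h1; rfl
      · rw [if_neg (fun hh => h1 (And.left hh).symm), if_neg (fun hh => h1 (And.left hh))]
    -- choose the support index of each column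
    have hex : ∀ c, ∃ i, U 0 i c ≠ 0 := by
      intro c
      by_contra hne
      push_neg at hne
      have hcc := col 0 c c
      rw [if_pos rfl, Finset.sum_eq_zero (fun i _ => by rw [hne i, zero_mul])] at hcc
      norm_num at hcc
    choose τ hτ using hex
    have hC0 : ∀ c l, l ≠ τ c → U 2 l c = 0 := by
      intro c l hl
      have hr := R1 (τ c) l c
      rw [if_neg (fun hh => hl hh.symm)] at hr
      rcases mul_eq_zero.mp hr with hh | hh
      · exact absurd hh (hτ c)
      · exact hh
    have hB0 : ∀ c l, l ≠ τ c → U 1 l c = 0 := by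
      intro c l hl
      have hr := R2 (τ c) l c
      rw [if_neg (fun hh => hl hh.symm)] at hr
      rcases mul_eq_zero.mp hr with hh | hh
      · exact absurd hh (hτ c)
      · exact hh
    have hγ : ∀ c, U 2 (τ c) c * U 2 (τ c) c = 1 := by
      intro c
      have hcc := col 2 c c
      rw [if_pos rfl, Finset.sum_eq_single (τ c)
        (fun l _ hl => by rw [hC0 c l hl, zero_mul])
        (fun hh => absurd (Finset.mem_univ _) hh)] at hcc
      exact hcc
    have hγne : ∀ c, U 2 (τ c) c ≠ 0 := by
      intro c hh
      have := hγ c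
      rw [hh, zero_mul] at this
      norm_num at this
    have hA0 : ∀ c i, i ≠ τ c → U 0 i c = 0 := by
      intro c i hi
      have hr := R1 i (τ c) c
      rw [if_neg hi] at hr
      rcases mul_eq_zero.mp hr with hh | hh
      · exact hh
      · exact absurd hh (hγne c)
    have hα : ∀ c, U 0 (τ c) c * U 0 (τ c) c = 1 := by
      intro c
      have hcc := col 0 c c
      rw [if_pos rfl, Finset.sum_eq_single (τ c)
        (fun l _ hl => by rw [hA0 c l hl, zero_mul])
        (fun hh => absurd (Finset.mem_univ _) hh)] at hcc
      exact hcc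
    have hβ : ∀ c, U 1 (τ c) c * U 1 (τ c) c = 1 := by
      intro c
      have hcc := col 1 c c
      rw [if_pos rfl, Finset.sum_eq_single (τ c)
        (fun l _ hl => by rw [hB0 c l hl, zero_mul])
        (fun hh => absurd (Finset.mem_univ _) hh)] at hcc
      exact hcc
    have hd1 : ∀ c, U 0 (τ c) c * U 2 (τ c) c = U 1 (τ c) c := by
      intro c
      have hr := R1 (τ c) (τ c) c
      rwa [if_pos rfl] at hr
    have hprod1 : ∀ c, U 0 (τ c) c * U 1 (τ c) c * U 2 (τ c) c = 1 := by
      intro c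
      rw [← hd1 c]
      calc U 0 (τ c) c * (U 0 (τ c) c * U 2 (τ c) c) * U 2 (τ c) c
          = (U 0 (τ c) c * U 0 (τ c) c) * (U 2 (τ c) c * U 2 (τ c) c) := by ring
        _ = 1 := by rw [hα, hγ, one_mul]
    have hinj : Function.Injective τ := by
      intro c c' hcc
      by_contra hne
      have hcol := col 0 c c'
      rw [if_neg hne, Finset.sum_eq_single (τ c)
        (fun m _ hm => by rw [hA0 c m hm, zero_mul])
        (fun hh => absurd (Finset.mem_univ _) hh)] at hcol
      rw [hcc] at hcol
      rcases mul_eq_zero.mp hcol with hh | hh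
      · exact (by rw [← hcc] at hh; exact hτ c hh)
      · exact hτ c' hh
    let τeq : Equiv.Perm (Fin 4) := Equiv.ofBijective τ (Finite.injective_iff_bijective.mp hinj)
    let σ : Equiv.Perm (Fin 4) := τeq.symm
    have hτeq : ∀ c, τeq c = τ c := fun c => rfl
    have hστ : ∀ c, σ (τ c) = c := fun c => by
      show τeq.symm (τ c) = c
      rw [← hτeq c, Equiv.symm_apply_apply]
    have hτσ : ∀ i, τ (σ i) = i := fun i => by
      have := Equiv.apply_symm_apply τeq i
      rw [hτeq] at this
      exact this
    set B : Fin 3 → Matrix (Fin 4) (Fin 4) ℝ :=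
      fun k => Matrix.diagonal (fun c => U k (τ c) c) with hBdef
    have hzero : ∀ (k : Fin 3) i c, i ≠ τ c → U k i c = 0 := by
      intro k
      fin_cases k
      · exact fun i c hh => hA0 c i hh
      · exact fun i c hh => hB0 c i hh
      · exact fun i c hh => hC0 c i hh
    have hsq : ∀ (k : Fin 3) c, U k (τ c) c * U k (τ c) c = 1 := by
      intro k
      fin_cases k
      · exact hα
      · exact hβ
      · exact hγ
    have hUeq : ∀ k, U k = σ.toPEquiv.toMatrix * B k := by
      intro k
      ext i c
      rw [Matrix.mul_diagonal, PEquiv.toMatrix_apply]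
      simp only [Equiv.toPEquiv_apply, Option.mem_def, Option.some.injEq]
      by_cases hc : τ c = i
      · have hσi : σ i = c := by rw [← hc, hστ]
        rw [if_pos hσi, one_mul, hc]
      · have hσi : σ i ≠ c := by
          intro hh
          exact hc (by rw [← hh, hτσ])
        rw [if_neg hσi, zero_mul]
        exact hzero k i c (fun hh => hc hh.symm)
    have hBT : ∀ k, (B k)ᵀ * B k = 1 := by
      intro k
      rw [hBdef]
      simp only [Matrix.diagonal_transpose, Matrix.diagonal_mul_diagonal]
      rw [show (fun c => U k (τ c) c * U k (τ c) c) = fun _ => (1:ℝ) from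
        funext fun c => hsq k c, Matrix.diagonal_one]
    have hprodB : B 0 * B 1 * B 2 = 1 := by
      rw [hBdef]
      simp only [Matrix.diagonal_mul_diagonal]
      rw [show (fun c => U 0 (τ c) c * U 1 (τ c) c * U 2 (τ c) c) = fun _ => (1:ℝ) from
        funext fun c => hprod1 c, Matrix.diagonal_one]
    -- determinants
    have hPB : ∀ k, (σ.toPEquiv.toMatrix : Matrix (Fin 4) (Fin 4) ℝ).det * (B k).det = 1 := by
      intro k
      rw [← Matrix.det_mul, ← hUeq k, hUd k]
    have hdetB3 : (B 0).det * (B 1).det * (B 2).det = 1 := by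
      rw [← Matrix.det_mul, ← Matrix.det_mul, hprodB, Matrix.det_one]
    set p := (σ.toPEquiv.toMatrix : Matrix (Fin 4) (Fin 4) ℝ).det with hp
    have hp3 : p * p * p = 1 := by
      calc p * p * p = p * p * p * ((B 0).det * (B 1).det * (B 2).det) := by
            rw [hdetB3, mul_one]
        _ = (p * (B 0).det) * (p * (B 1).det) * (p * (B 2).det) := by ring
        _ = 1 := by rw [hPB 0, hPB 1, hPB 2]; norm_num
    have hp1 : p = 1 := by nlinarith [sq_nonneg (p - 1), sq_nonneg (p + 1)]
    have hdB1 : ∀ k, (B k).det = 1 := by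
      intro k
      have := hPB k
      rw [hp1, one_mul] at this
      exact this
    exact ⟨σ, B, hp1, fun k => ⟨Matrix.isDiag_diagonal _, hBT k, hdB1 k⟩, hprodB, hUeq⟩
  · rintro ⟨σ, B, hPdet, hB, hprod, hUe⟩
    funext f
    rw [mulVec, dotProduct]
    have heq : ∀ g, bigOpR U f g * GHZ3 g
        = (fun g : Fin 3 → Fin 4 => ∏ k : Fin 3, U k (f k) (g k)) g * GHZ3 g := fun g => rfl
    rw [Finset.sum_congr rfl fun g _ => heq g, key_sum]
    have hentry : ∀ (k : Fin 3) (i c : Fin 4), U k i c = B k (σ i) c := by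
      intro k i c
      rw [hUe k, mul_apply]
      have hterm : ∀ m, σ.toPEquiv.toMatrix i m * B k m c
          = (if m = σ i then 1 else 0) * B k m c := by
        intro m
        rw [PEquiv.toMatrix_apply]
        simp only [Equiv.toPEquiv_apply, Option.mem_def, Option.some.injEq]
        by_cases hm : σ i = m
        · rw [if_pos hm, if_pos hm.symm]
        · rw [if_neg hm, if_neg (fun hh => hm hh.symm)]
      rw [Finset.sum_congr rfl fun m _ => hterm m]
      simp [Finset.sum_ite_eq']
    have hterm2 : ∀ c, (∏ k : Fin 3, U k (f k) ((fun _ => c) k))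
        = ∏ k : Fin 3, B k (σ (f k)) c :=
      fun c => Finset.prod_congr rfl fun k _ => hentry k (f k) c
    rw [Finset.sum_congr rfl fun c _ => hterm2 c]
    by_cases hf : ∃ c0 : Fin 4, ∀ k, f k = c0
    · obtain ⟨c0, hc0⟩ := hf
      rw [show GHZ3 f = 1 from if_pos ⟨c0, hc0⟩]
      rw [Finset.sum_eq_single (σ c0)
        (fun c _ hc => Finset.prod_eq_zero (Finset.mem_univ (0 : Fin 3))
          (by rw [hc0 0]; exact (hB 0).1 (Ne.symm hc)))
        (fun hh => absurd (Finset.mem_univ _) hh)]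
      have : (∏ k : Fin 3, B k (σ (f k)) (σ c0))
          = B 0 (σ c0) (σ c0) * B 1 (σ c0) (σ c0) * B 2 (σ c0) (σ c0) := by
        rw [Fin.prod_univ_three, hc0 0, hc0 1, hc0 2]
      rw [this]
      have h01 : (B 0 * B 1) (σ c0) (σ c0) = B 0 (σ c0) (σ c0) * B 1 (σ c0) (σ c0) :=
        diag_mul_apply _ _ (hB 0).1 _
      have h012 : (B 0 * B 1 * B 2) (σ c0) (σ c0) = (B 0 * B 1) (σ c0) (σ c0) * B 2 (σ c0) (σ c0) :=
        diag_mul_apply _ _ (isDiag_mul_isDiag (hB 0).1 (hB 1).1) _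
      rw [← h01, ← h012, hprod, Matrix.one_apply_eq]
    · rw [show GHZ3 f = 0 from if_neg hf]
      refine Finset.sum_eq_zero fun c _ => ?_
      have : ∃ k : Fin 3, σ (f k) ≠ c := by
        by_contra hall
        push_neg at hall
        exact hf ⟨σ.symm c, fun k => by rw [← hall k, Equiv.symm_apply_apply]⟩
      obtain ⟨k, hk⟩ := this
      exact Finset.prod_eq_zero (Finset.mem_univ k) ((hB k).1 hk)
end
end

section
/- Let φ ∈ (ℂ^D)^{⊗n} be a 1-uniform (critical) state of unit norm, n even, with φ_i = ⟨i|₁φ. If U = U₁⊗⋯⊗U_n with U_i ∈ SU(D) and ψ = e^{it}·U·φ for some t ∈ ℝ, then the spans C = span{⟨i|₁φ} and C' = span{⟨i|₁ψ} satisfy C' = (U₂⊗⋯⊗U_n)·C... conversely, if span{⟨i|₁φ} = Ũ·span{⟨i|₁ψ} for some local unitary Ũ on the last n−1 factors, then φ = (U₀ ⊗ Ũ)ψ for some U₀ ∈ U(D) acting on the first factor. -/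
open Matrix Complex
open scoped BigOperators
noncomputable section

/-- The contraction `⟨i|₁φ` of `φ ∈ (ℂ^D)^{⊗(n+1)}` with `⟨i|` in the first factor. -/
def cont {n D : ℕ} (φ : (Fin (n + 1) → Fin D) → ℂ) (i : Fin D) : (Fin n → Fin D) → ℂ :=
  fun f => φ (Fin.cons i f)

/-!
Collect the contractions `⟨i|₁φ` as the rows of a matrix `X_φ`. The row matrix of
`(U₀ ⊗ Ũ)·φ` is `U₀ X_φ Ũᵀ`, and for a unit vector, 1-uniformity on the first site says exactly
`X_φ X_φᴴ = D⁻¹·1` (the trace is the norm). For (1), the rows of `A X` span the same space as those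
of `X` when `A` is invertible. For (2), the span hypothesis gives `X_φ = C E` for some `C`, where `E = X_ψ Ũᵀ`.
Both Gram matrices are `D⁻¹·1` because `Ũ` is unitary, so `C` is unitary, and `X_φ` is the
row matrix of `(C ⊗ Ũ)·ψ`.
-/

namespace Matrix

variable {ι κ α R : Type*} [Fintype κ]

theorem mul_of_apply_mem_span_range [CommSemiring R] (C : Matrix ι κ R) (v : κ → α → R) (i : ι) :
    (C * of v) i ∈ Submodule.span R (Set.range v) :=
  (Submodule.mem_span_range_iff_exists_fun R).2 ⟨C i, (vecMul_eq_sum _ _).symm⟩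

theorem exists_of_eq_mul_of_forall_mem_span_range [CommSemiring R] {w : ι → α → R}
    {v : κ → α → R} (h : ∀ i, w i ∈ Submodule.span R (Set.range v)) :
    ∃ C : Matrix ι κ R, of w = C * of v := by
  choose C hC using fun i => (Submodule.mem_span_range_iff_exists_fun R).1 (h i)
  exact ⟨of C, funext fun i => by rw [mul_apply_eq_vecMul, vecMul_eq_sum]; exact (hC i).symm⟩

theorem span_rows_mul_of_isUnit [CommRing R] [DecidableEq κ] {A : Matrix κ κ R}
    (hA : IsUnit A) (v : κ → α → R) :
    Submodule.span R (Set.range fun i => (A * of v) i) = Submodule.span R (Set.range v) := by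
  have hv : of v = A⁻¹ * (A * of v) := by
    rw [← Matrix.mul_assoc, nonsing_inv_mul _ ((isUnit_iff_isUnit_det A).1 hA), Matrix.one_mul]
  apply le_antisymm <;> rw [Submodule.span_le] <;> rintro _ ⟨i, rfl⟩
  · exact mul_of_apply_mem_span_range A v i
  · rw [show v i = (A⁻¹ * (A * of v)) i from congrFun hv i]
    exact mul_of_apply_mem_span_range A⁻¹ (fun i => (A * of v) i) i

omit [Fintype κ] in
theorem of_mulVec_eq_mul_transpose [CommSemiring R] [Fintype α] (N : Matrix α α R)
    (v : κ → α → R) : of (fun i => N *ᵥ v i) = of v * Nᵀ :=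
  funext fun i => (vecMul_transpose N (v i)).symm

omit [Fintype κ] in
theorem span_range_mulVec [CommSemiring R] [Fintype α] (N : Matrix α α R) (v : κ → α → R) :
    Submodule.span R (Set.range fun i => N *ᵥ v i) =
      Submodule.map N.mulVecLin (Submodule.span R (Set.range v)) := by
  rw [Submodule.map_span, ← Set.range_comp]
  rfl

theorem mul_conjTranspose_eq_one_of_smul_gram [CommRing R] [StarRing R] [DecidableEq κ]
    [Fintype α] {c : R} {E F : Matrix κ α R} {C : Matrix κ κ R}
    (hE : c • (E * Eᴴ) = 1) (hF : c • (F * Fᴴ) = 1) (hC : F = C * E) : C * Cᴴ = 1 := by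
  rw [← hF, hC, conjTranspose_mul, Matrix.mul_assoc, ← Matrix.mul_assoc E, ← mul_smul_comm,
    ← smul_mul_assoc, hE, Matrix.one_mul]

end Matrix

section LocalOperators

variable {n D : ℕ}

theorem bigOp_mul (A B : Fin n → Matrix (Fin D) (Fin D) ℂ) :
    bigOp A * bigOp B = bigOp fun k => A k * B k := by
  ext f g
  simp only [bigOp, mul_apply, of_apply]
  rw [Fintype.prod_sum fun k j => A k (f k) j * B k j (g k)]
  exact Finset.sum_congr rfl fun h _ => Finset.prod_mul_distrib.symm

theorem bigOp_conjTranspose (A : Fin n → Matrix (Fin D) (Fin D) ℂ) :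
    (bigOp A)ᴴ = bigOp fun k => (A k)ᴴ := by
  ext f g
  simp [bigOp, conjTranspose_apply]

theorem bigOp_one : bigOp (fun _ : Fin n => (1 : Matrix (Fin D) (Fin D) ℂ)) = 1 := by
  ext f g
  simp [bigOp, one_apply, Fintype.prod_boole, funext_iff]

theorem bigOp_conjTranspose_mul_self {A : Fin n → Matrix (Fin D) (Fin D) ℂ}
    (hA : ∀ k, (A k)ᴴ * A k = 1) : (bigOp A)ᴴ * bigOp A = 1 := by
  rw [bigOp_conjTranspose, bigOp_mul, funext hA, bigOp_one]

end LocalOperators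

section Contraction

variable {n D : ℕ}

theorem sum_fin_cons {M : Type*} [AddCommMonoid M] (F : (Fin (n + 1) → Fin D) → M) :
    ∑ f, F f = ∑ i, ∑ h : Fin n → Fin D, F (Fin.cons i h) := by
  rw [← (Fin.consEquiv fun _ => Fin D).sum_comp F, Fintype.sum_prod_type]
  rfl

theorem cont_injective : Function.Injective (cont : ((Fin (n + 1) → Fin D) → ℂ) → _) := by
  intro φ ψ h
  funext f
  rw [← Fin.cons_self_tail f]
  exact congrFun (congrFun h (f 0)) (Fin.tail f)

theorem of_cont_smul (c : ℂ) (φ : (Fin (n + 1) → Fin D) → ℂ) :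
    of (cont (c • φ)) = c • of (cont φ) :=
  rfl

theorem of_cont_bigOp_mulVec (Us : Fin (n + 1) → Matrix (Fin D) (Fin D) ℂ)
    (φ : (Fin (n + 1) → Fin D) → ℂ) :
    of (cont ((bigOp Us).mulVec φ)) =
      Us 0 * of (cont φ) * (bigOp fun k : Fin n => Us k.succ)ᵀ := by
  ext i g
  simp only [cont, of_apply, mulVec, dotProduct, mul_apply, transpose_apply, bigOp,
    Finset.sum_mul, sum_fin_cons, Fin.prod_univ_succ, Fin.cons_zero, Fin.cons_succ]
  rw [Finset.sum_comm]
  exact Finset.sum_congr rfl fun j _ => Finset.sum_congr rfl fun h _ => by ring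

theorem red_singleton_zero_const (φ : (Fin (n + 1) → Fin D) → ℂ) (i j : Fin D) :
    red φ {0} (fun _ => i) (fun _ => j) = D * (of (cont φ) * (of (cont φ))ᴴ) i j := by
  have hsel : ∀ (a : Fin D) (f : Fin (n + 1) → Fin D),
      (fun x => if x ∈ ({0} : Finset (Fin (n + 1))) then a else f x) = Fin.cons a (Fin.tail f) := by
    intro a f
    funext x
    refine Fin.cases ?_ (fun k => ?_) x <;> simp [Fin.succ_ne_zero, Fin.tail]
  simp only [red, hsel, sum_fin_cons (M := ℂ), Fin.tail_cons, Finset.sum_const, Finset.card_univ,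
    Fintype.card_fin, nsmul_eq_mul, mul_apply, conjTranspose_apply, of_apply, cont, RCLike.star_def]

theorem trace_of_cont_mul_conjTranspose (φ : (Fin (n + 1) → Fin D) → ℂ) :
    (of (cont φ) * (of (cont φ))ᴴ).trace = ∑ f, (starRingEnd ℂ) (φ f) * φ f := by
  simp only [trace, diag, mul_apply, conjTranspose_apply, of_apply, cont, RCLike.star_def,
    sum_fin_cons (M := ℂ), mul_comm]

end Contraction

theorem natCast_smul_of_cont_mul_conjTranspose_eq_one {n D : ℕ} {φ : (Fin (n + 1) → Fin D) → ℂ}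
    (hn : ∑ f : Fin (n + 1) → Fin D, (starRingEnd ℂ) (φ f) * φ f = 1) (hu : IsUniform 1 φ) :
    (D : ℂ) • (of (cont φ) * (of (cont φ))ᴴ) = 1 := by
  set G := of (cont φ) * (of (cont φ))ᴴ
  obtain ⟨c, hc⟩ := hu {0} (Finset.card_singleton 0)
  have hscalar : (D : ℂ) • G = c • 1 := by
    ext i j
    rw [Matrix.smul_apply, smul_eq_mul, ← red_singleton_zero_const, hc]
    simp [one_apply]
  have htrace : G.trace = 1 := (trace_of_cont_mul_conjTranspose φ).trans hn
  have hD : (D : ℂ) ≠ 0 := Nat.cast_ne_zero.2 (by rintro rfl; simp [trace] at htrace)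
  have hc1 : c = 1 := by
    have h := congrArg trace hscalar
    rw [trace_smul, trace_smul, htrace, trace_one, Fintype.card_fin, smul_eq_mul, smul_eq_mul,
      mul_one] at h
    exact (mul_eq_right₀ hD).1 h.symm
  rw [hscalar, hc1, one_smul]

theorem span_range_cont_smul_bigOp_mulVec {n D : ℕ} {c : ℂ} (hc : c ≠ 0)
    {Us : Fin (n + 1) → Matrix (Fin D) (Fin D) ℂ} (hU : IsUnit (Us 0))
    (φ : (Fin (n + 1) → Fin D) → ℂ) :
    Submodule.span ℂ (Set.range (cont (c • (bigOp Us).mulVec φ))) =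
      Submodule.map (bigOp fun k : Fin n => Us k.succ).mulVecLin
        (Submodule.span ℂ (Set.range (cont φ))) := by
  set N := bigOp fun k : Fin n => Us k.succ
  have hunit : IsUnit (c • Us 0) := by
    rw [isUnit_iff_isUnit_det, det_smul]
    exact (hc.isUnit.pow _).mul ((isUnit_iff_isUnit_det _).1 hU)
  have hrows : of (cont (c • (bigOp Us).mulVec φ)) = (c • Us 0) * of fun j => N *ᵥ cont φ j := by
    rw [of_cont_smul, of_cont_bigOp_mulVec, of_mulVec_eq_mul_transpose, Matrix.mul_assoc,
      Matrix.smul_mul]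
  rw [← span_range_mulVec, ← span_rows_mul_of_isUnit hunit (fun j => N *ᵥ cont φ j), ← hrows]
  rfl

theorem exists_unitary_eq_bigOp_cons_mulVec {n D : ℕ} {φ ψ : (Fin (n + 1) → Fin D) → ℂ}
    (hφn : ∑ f : Fin (n + 1) → Fin D, (starRingEnd ℂ) (φ f) * φ f = 1)
    (hψn : ∑ f : Fin (n + 1) → Fin D, (starRingEnd ℂ) (ψ f) * ψ f = 1)
    (hφu : IsUniform 1 φ) (hψu : IsUniform 1 ψ) {Us : Fin n → Matrix (Fin D) (Fin D) ℂ}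
    (hUs : ∀ k, (Us k)ᴴ * Us k = 1)
    (hspan : Submodule.span ℂ (Set.range (cont φ)) =
      Submodule.map (bigOp Us).mulVecLin (Submodule.span ℂ (Set.range (cont ψ)))) :
    ∃ U0 : Matrix (Fin D) (Fin D) ℂ, U0ᴴ * U0 = 1 ∧ φ = (bigOp (Fin.cons U0 Us)).mulVec ψ := by
  rw [← span_range_mulVec] at hspan
  obtain ⟨C, hC⟩ := exists_of_eq_mul_of_forall_mem_span_range fun i =>
    hspan ▸ Submodule.subset_span (Set.mem_range_self i)
  rw [of_mulVec_eq_mul_transpose] at hC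
  have hNT : (bigOp Us)ᵀ * (bigOp Us)ᵀᴴ = 1 := by
    rw [conjTranspose_transpose_eq_transpose_conjTranspose, ← transpose_mul,
      bigOp_conjTranspose_mul_self hUs, transpose_one]
  have hE : (D : ℂ) • ((of (cont ψ) * (bigOp Us)ᵀ) * (of (cont ψ) * (bigOp Us)ᵀ)ᴴ) = 1 := by
    rw [conjTranspose_mul, Matrix.mul_assoc, ← Matrix.mul_assoc (bigOp Us)ᵀ, hNT, Matrix.one_mul]
    exact natCast_smul_of_cont_mul_conjTranspose_eq_one hψn hψu
  have hCC := mul_conjTranspose_eq_one_of_smul_gram hE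
    (natCast_smul_of_cont_mul_conjTranspose_eq_one hφn hφu) hC
  refine ⟨C, mul_eq_one_comm.1 hCC, cont_injective (of.injective ?_)⟩
  rw [hC, of_cont_bigOp_mulVec, Matrix.mul_assoc]
  simp only [Fin.cons_zero, Fin.cons_succ]

theorem stmt_19_general {n D : ℕ}
    (φ ψ : (Fin (n + 1) → Fin D) → ℂ)
    (hφn : ∑ f : Fin (n + 1) → Fin D, (starRingEnd ℂ) (φ f) * φ f = 1)
    (hψn : ∑ f : Fin (n + 1) → Fin D, (starRingEnd ℂ) (ψ f) * ψ f = 1)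
    (hφu : IsUniform 1 φ) (hψu : IsUniform 1 ψ) :
    (∀ (t : ℝ) (Us : Fin (n + 1) → Matrix (Fin D) (Fin D) ℂ),
        (∀ k, (Us k)ᴴ * Us k = 1 ∧ (Us k).det = 1) →
        ψ = Complex.exp (Complex.I * t) • (bigOp Us).mulVec φ →
        Submodule.span ℂ (Set.range (cont ψ)) =
          Submodule.map (bigOp fun k : Fin n => Us k.succ).mulVecLin
            (Submodule.span ℂ (Set.range (cont φ)))) ∧
      (∀ Us : Fin n → Matrix (Fin D) (Fin D) ℂ,
        (∀ k, (Us k)ᴴ * Us k = 1) →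
        Submodule.span ℂ (Set.range (cont φ)) =
          Submodule.map (bigOp Us).mulVecLin (Submodule.span ℂ (Set.range (cont ψ))) →
        ∃ U0 : Matrix (Fin D) (Fin D) ℂ, U0ᴴ * U0 = 1 ∧
          φ = (bigOp (Fin.cons U0 Us)).mulVec ψ) := by
  refine ⟨fun t Us hUs hψ => ?_, fun Us hUs hspan => ?_⟩
  · have hU0 : IsUnit (Us 0) := (isUnit_iff_isUnit_det _).2 ((hUs 0).2 ▸ isUnit_one)
    rw [hψ]
    exact span_range_cont_smul_bigOp_mulVec (Complex.exp_ne_zero _) hU0 φ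
  · exact exists_unitary_eq_bigOp_cons_mulVec hφn hψn hφu hψu hUs hspan

/-- Let `φ, ψ` be unit-norm 1-uniform (critical) states on an even number `n+1` of qudits.
(1) If `ψ = e^{it}·(U₁⊗⋯⊗U_{n+1})·φ` with each `U_k ∈ SU(D)`, then
`span{⟨i|₁ψ} = (U₂⊗⋯⊗U_{n+1})·span{⟨i|₁φ}`.
(2) Conversely, if `span{⟨i|₁φ} = Ũ·span{⟨i|₁ψ}` for a local unitary `Ũ` on the last `n`
factors, then `φ = (U₀ ⊗ Ũ)·ψ` for some unitary `U₀` on the first factor. -/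
theorem stmt_19 {n D : ℕ} (hEven : Even (n + 1))
    (φ ψ : (Fin (n + 1) → Fin D) → ℂ)
    (hφn : ∑ f : Fin (n + 1) → Fin D, (starRingEnd ℂ) (φ f) * φ f = 1)
    (hψn : ∑ f : Fin (n + 1) → Fin D, (starRingEnd ℂ) (ψ f) * ψ f = 1)
    (hφu : IsUniform 1 φ) (hψu : IsUniform 1 ψ) :
    (∀ (t : ℝ) (Us : Fin (n + 1) → Matrix (Fin D) (Fin D) ℂ),
        (∀ k, (Us k)ᴴ * Us k = 1 ∧ (Us k).det = 1) →
        ψ = Complex.exp (Complex.I * t) • (bigOp Us).mulVec φ →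
        Submodule.span ℂ (Set.range (cont ψ)) =
          Submodule.map (bigOp fun k : Fin n => Us k.succ).mulVecLin
            (Submodule.span ℂ (Set.range (cont φ)))) ∧
      (∀ Us : Fin n → Matrix (Fin D) (Fin D) ℂ,
        (∀ k, (Us k)ᴴ * Us k = 1) →
        Submodule.span ℂ (Set.range (cont φ)) =
          Submodule.map (bigOp Us).mulVecLin (Submodule.span ℂ (Set.range (cont ψ))) →
        ∃ U0 : Matrix (Fin D) (Fin D) ℂ, U0ᴴ * U0 = 1 ∧
          φ = (bigOp (Fin.cons U0 Us)).mulVec ψ) :=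
  stmt_19_general φ ψ hφn hψn hφu hψu
end
end
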